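/- Under the Mallows model with identity central ranking and dispersion q ∈ (0,1), the probability that a random permutation has a given top-k list π_k as its first k entries equals q^{d_K(π_k)} · ψ(n-k, q) / ψ(n, q), where d_K(π_k) = Σ_{i=1}^{k} ( Σ_{j=i+1}^{k} 1{π_k(i) > π_k(j)} + Σ_{j ∉ R(π_k)} 1{π_k(i) > j} ). Equivalently, the sum of q^{d_K(π)} over all permutations π extending π_k equals q^{d_K(π_k)} · ψ(n-k, q). -/

import Mathlib

/-!
Fix the first `k` entries and sum over the value `x` of entry `k + 1`, which ranges over the
`n - k` unlisted items. Appending `x` to the list adds to `d_K` exactly the number of unlisted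
items below `x`, i.e. the rank of `x` among the unlisted items, so summing `q ^ rank` over them
contributes the factor `1 + q + ⋯ + q ^ (n - k - 1)` of `ψ(n - k, q)`. Induction on `n - k`
finishes the argument, since for `k = n` the top-`k` list is the permutation itself and `d_K`
of the list is its inversion number.
-/

open Finset

/-- ψ(m,q) = ∏_{i=1}^{m} (1 + q + ... + q^{i-1}). -/
def psi (n : ℕ) (q : ℝ) : ℝ := ∏ i ∈ Finset.range n, ∑ j ∈ Finset.range (i + 1), q ^ j

/-- Kendall tau distance (inversion count) of a full permutation from the identity. -/
def dK {n : ℕ} (π : Equiv.Perm (Fin n)) : ℕ :=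
  ∑ i : Fin n, ∑ j : Fin n, if i < j ∧ π j < π i then 1 else 0

/-- Kendall tau statistic of a top-k list: inversions among the listed items plus
inversions between listed items and smaller unlisted items. -/
def dKtop {n k : ℕ} (f : Fin k → Fin n) : ℕ :=
  ∑ i : Fin k,
    ((∑ j : Fin k, if i < j ∧ f j < f i then 1 else 0) +
      (Finset.univ.filter
        (fun x : Fin n => x ∉ Finset.image f Finset.univ ∧ x < f i)).card)

open Function Equiv

theorem sum_card_filter_lt {α M : Type*} [LinearOrder α] [AddCommMonoid M]
    (T : Finset α) (g : ℕ → M) :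
    ∑ x ∈ T, g #{y ∈ T | y < x} = ∑ j ∈ range #T, g j := by
  induction T using Finset.induction_on_max with
  | empty => simp
  | insert a s ha ih =>
    have has : a ∉ s := fun h => lt_irrefl a (ha a h)
    have h_top : {y ∈ insert a s | y < a} = s := by
      ext y
      simp only [mem_filter, mem_insert]
      exact ⟨fun ⟨h, hy⟩ => h.resolve_left hy.ne, fun h => ⟨Or.inr h, ha y h⟩⟩
    have h_rest : ∀ x ∈ s, {y ∈ insert a s | y < x} = {y ∈ s | y < x} := fun x hx => by
      rw [filter_insert, if_neg (ha x hx).not_gt]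
    rw [sum_insert has, card_insert_of_notMem has, sum_range_succ, h_top,
      sum_congr rfl fun x hx => by rw [h_rest x hx], ih, add_comm]

theorem card_filter_notMem_insert_and_lt {α : Type*} [Fintype α] [LinearOrder α]
    {s : Finset α} {x : α} (hx : x ∉ s) (z : α) :
    #{y | y ∉ insert x s ∧ y < z} + (if x < z then 1 else 0) = #{y | y ∉ s ∧ y < z} := by
  split_ifs with hxz
  · rw [← card_insert_of_notMem (s := {y | y ∉ insert x s ∧ y < z}) (a := x) (by simp)]
    congr 1
    ext y
    by_cases hy : y = x <;> simp [hy, hx, hxz]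
  · rw [add_zero]
    congr 1
    ext y
    by_cases hy : y = x <;> simp [hy, hxz]

theorem psi_succ (m : ℕ) (q : ℝ) :
    psi (m + 1) q = psi m q * ∑ j ∈ range (m + 1), q ^ j :=
  prod_range_succ _ _

section TopLists

variable {n k : ℕ}

def topExtensions (hkn : k ≤ n) (f : Fin k → Fin n) : Finset (Perm (Fin n)) :=
  {π | ∀ i, π (Fin.castLE hkn i) = f i}

def unlisted (f : Fin k → Fin n) : Finset (Fin n) := (univ.image f)ᶜ

theorem card_unlisted {f : Fin k → Fin n} (hf : Injective f) : #(unlisted f) = n - k := by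
  rw [unlisted, card_compl, card_image_of_injective _ hf, card_univ, Fintype.card_fin,
    Fintype.card_fin]

theorem image_snoc (f : Fin k → Fin n) (x : Fin n) :
    univ.image (Fin.snoc f x : Fin (k + 1) → Fin n) = insert x (univ.image f) := by
  ext y
  simp [Fin.exists_fin_succ', or_comm, eq_comm]

theorem dKtop_snoc (f : Fin k → Fin n) {x : Fin n} (hx : x ∈ unlisted f) :
    dKtop (Fin.snoc f x : Fin (k + 1) → Fin n) = dKtop f + #{y ∈ unlisted f | y < x} := by
  have hx' : x ∉ univ.image f := mem_compl.mp hx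
  have h_inv : ∀ i : Fin k,
      (∑ j : Fin (k + 1), if i.castSucc < j ∧
          (Fin.snoc f x : Fin (k + 1) → Fin n) j < (Fin.snoc f x : Fin (k + 1) → Fin n) i.castSucc
        then 1 else 0) =
        (∑ j : Fin k, if i < j ∧ f j < f i then 1 else 0) + if x < f i then 1 else 0 := by
    intro i
    rw [Fin.sum_univ_castSucc]
    simp [Fin.castSucc_lt_last]
  have h_inv_last : (∑ j : Fin (k + 1), if Fin.last k < j ∧
      (Fin.snoc f x : Fin (k + 1) → Fin n) j < (Fin.snoc f x : Fin (k + 1) → Fin n) (Fin.last k)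
      then 1 else 0) = 0 :=
    sum_eq_zero fun j _ => if_neg fun h => (Fin.le_last j).not_gt h.1
  have h_below_last :
      #{y | y ∉ univ.image (Fin.snoc f x : Fin (k + 1) → Fin n) ∧
          y < (Fin.snoc f x : Fin (k + 1) → Fin n) (Fin.last k)}
        = #{y ∈ unlisted f | y < x} := by
    congr 1
    ext y
    simp only [image_snoc, Fin.snoc_last, unlisted, mem_filter, mem_univ, mem_insert, mem_compl,
      true_and, not_or]
    exact ⟨fun ⟨⟨_, h⟩, hy⟩ => ⟨h, hy⟩, fun ⟨h, hy⟩ => ⟨⟨hy.ne, h⟩, hy⟩⟩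
  unfold dKtop
  rw [Fin.sum_univ_castSucc, h_inv_last, h_below_last, zero_add]
  congr 1
  refine sum_congr rfl fun i _ => ?_
  rw [h_inv, image_snoc, Fin.snoc_castSucc, ← card_filter_notMem_insert_and_lt hx' (f i)]
  ring

theorem mem_topExtensions_snoc (hk : k < n) (f : Fin k → Fin n) (x : Fin n)
    (π : Perm (Fin n)) :
    π ∈ topExtensions hk (Fin.snoc f x) ↔ π ∈ topExtensions hk.le f ∧ π ⟨k, hk⟩ = x := by
  simp only [topExtensions, mem_filter, mem_univ, true_and, Fin.forall_fin_succ',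
    Fin.snoc_castSucc, Fin.snoc_last]
  rfl

theorem apply_mem_unlisted (hk : k < n) {f : Fin k → Fin n} {π : Perm (Fin n)}
    (hπ : π ∈ topExtensions hk.le f) : π ⟨k, hk⟩ ∈ unlisted f := by
  simp only [topExtensions, mem_filter, mem_univ, true_and] at hπ
  simp only [unlisted, mem_compl, mem_image, mem_univ, true_and, not_exists]
  intro i hi
  rw [← hπ i, π.apply_eq_iff_eq, Fin.ext_iff, Fin.val_castLE] at hi
  exact i.isLt.ne hi

theorem dKtop_eq_dK (π : Perm (Fin n)) : dKtop ⇑π = dK π := by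
  have : univ.image ⇑π = univ := image_univ_equiv π
  simp [dKtop, dK, this]

theorem topExtensions_refl {f : Fin n → Fin n} (hf : Injective f) :
    topExtensions le_rfl f = {Equiv.ofBijective f hf.bijective_of_finite} := by
  ext π
  simp [topExtensions, Equiv.ext_iff]

end TopLists

theorem sum_topExtensions_pow_dK {n k : ℕ} (q : ℝ) (hkn : k ≤ n) (f : Fin k → Fin n)
    (hf : Injective f) :
    ∑ π ∈ topExtensions hkn f, q ^ dK π = q ^ dKtop f * psi (n - k) q := by
  rcases hkn.lt_or_eq with hk | rfl
  · have h_fiber : ∀ x ∈ unlisted f,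
        ∑ π ∈ topExtensions hkn f with π ⟨k, hk⟩ = x, q ^ dK π
          = q ^ dKtop f * psi (n - (k + 1)) q * q ^ #{y ∈ unlisted f | y < x} := by
      intro x hx
      have hsnoc := sum_topExtensions_pow_dK q (k := k + 1) hk (Fin.snoc f x)
        (Fin.snoc_injective_of_injective hf (by simpa [unlisted] using hx))
      rw [dKtop_snoc f hx, pow_add] at hsnoc
      rw [← mul_right_comm, ← hsnoc]
      congr 1
      ext π
      rw [mem_filter, mem_topExtensions_snoc hk]
    have h_len : n - k = n - (k + 1) + 1 := by omega
    rw [← sum_fiberwise_of_maps_to fun π => apply_mem_unlisted hk,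
      sum_congr rfl h_fiber, ← mul_sum, sum_card_filter_lt, card_unlisted hf, h_len, psi_succ,
      mul_assoc]
  · simp [topExtensions_refl hf, ← dKtop_eq_dK, psi]
termination_by n - k

theorem stmt11_general (n k : ℕ) (hkn : k ≤ n) (q : ℝ)
    (f : Fin k → Fin n) (hf : Function.Injective f) :
    (∑ π : Equiv.Perm (Fin n),
        if ∀ i : Fin k, π (Fin.castLE hkn i) = f i then q ^ dK π / psi n q else 0)
      = q ^ dKtop f * psi (n - k) q / psi n q ∧
    (∑ π : Equiv.Perm (Fin n),
        if ∀ i : Fin k, π (Fin.castLE hkn i) = f i then q ^ dK π else 0)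
      = q ^ dKtop f * psi (n - k) q := by
  have hsum := sum_topExtensions_pow_dK q hkn f hf
  rw [topExtensions, sum_filter] at hsum
  refine ⟨?_, hsum⟩
  simp only [← hsum, sum_div, ite_div, zero_div]

theorem stmt11 (n k : ℕ) (hkn : k ≤ n) (q : ℝ) (hq0 : 0 < q) (hq1 : q < 1)
    (f : Fin k → Fin n) (hf : Function.Injective f) :
    (∑ π : Equiv.Perm (Fin n),
        if ∀ i : Fin k, π (Fin.castLE hkn i) = f i then q ^ dK π / psi n q else 0)
      = q ^ dKtop f * psi (n - k) q / psi n q ∧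
    (∑ π : Equiv.Perm (Fin n),
        if ∀ i : Fin k, π (Fin.castLE hkn i) = f i then q ^ dK π else 0)
      = q ^ dKtop f * psi (n - k) q :=
  stmt11_general n k hkn q f hf
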